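/- arXiv:gr-qc/0702031 — 2 statements merged into one kernel-verified Lean document; each statement's English description precedes it below -/
import Mathlib

section
/- Let (Ω, μ) be a measure space, n ≥ 3 an integer, and h, A, B, u : Ω → ℝ measurable with A ≥ 0, B > 0 and u > 0 μ-a.e. Assume the integrals ∫ B·u^{(n+2)/(n-2)} dμ, ∫ A·u^{-(3n-2)/(n-2)} dμ and ∫ (h⁺)^{(n+2)/4}·B^{(2-n)/4} dμ are finite and that ∫ B·u^{(n+2)/(n-2)} dμ + ∫ A·u^{-(3n-2)/(n-2)} dμ ≤ ∫ h⁺·u dμ. Then (n^n/(n-1)^{n-1})^{(n+2)/(4n)} · ∫ A^{(n+2)/(4n)}·B^{(3n-2)/(4n)} dμ ≤ ∫ (h⁺)^{(n+2)/4}·B^{(2-n)/4} dμ. -/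
open MeasureTheory

/-- Young-type inequality with natural powers: `(n+1) xⁿ y ≤ n x^{n+1} + y^{n+1}`. -/
lemma young_nat (n : ℕ) (x y : ℝ) (hx : 0 ≤ x) (hy : 0 ≤ y) :
    ((n : ℝ) + 1) * (x ^ n * y) ≤ (n : ℝ) * x ^ (n + 1) + y ^ (n + 1) := by
  induction n with
  | zero => simp
  | succ n ih =>
    have sign : 0 ≤ (x ^ n * x - y ^ n * y) * (x - y) := by
      rcases le_total x y with hxy | hxy
      · have h1 : x ^ n * x ≤ y ^ n * y :=
          mul_le_mul (pow_le_pow_left₀ hx hxy n) hxy hx (pow_nonneg hy n)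
        nlinarith
      · have h1 : y ^ n * y ≤ x ^ n * x :=
          mul_le_mul (pow_le_pow_left₀ hy hxy n) hxy hy (pow_nonneg hx n)
        nlinarith
    simp only [pow_succ] at *
    push_cast
    nlinarith [mul_le_mul_of_nonneg_right ih hx, pow_nonneg hx n, pow_nonneg hy n]

/-- AM-GM consequence: `nⁿ A^{n-1}(B-A) ≤ (n-1)^{n-1} Bⁿ` for `A, B ≥ 0`, `n ≥ 3`. -/
lemma amgm_nat (n : ℕ) (hn : 3 ≤ n) (A B : ℝ) (hA : 0 ≤ A) (hB : 0 ≤ B) :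
    (n : ℝ) ^ n * (A ^ (n - 1) * (B - A)) ≤ ((n : ℝ) - 1) ^ (n - 1) * B ^ n := by
  obtain ⟨m, rfl⟩ : ∃ m, n = m + 1 := ⟨n - 1, by omega⟩
  have hc : (0 : ℝ) < (m : ℝ) := by
    have : 0 < m := by omega
    exact_mod_cast this
  set c : ℝ := (m : ℝ) with hcdef
  have hcast : ((m + 1 : ℕ) : ℝ) - 1 = c := by push_cast; ring
  have hx : 0 ≤ ((m : ℝ) + 1) * A / c := by positivity
  have key := young_nat m (((m : ℝ) + 1) * A / c) B hx hB
  have hkey := mul_le_mul_of_nonneg_right key (pow_nonneg hc.le m)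
  have e1 : (((m : ℝ) + 1) * A / c) ^ m * c ^ m = ((m : ℝ) + 1) ^ m * A ^ m := by
    rw [div_pow, div_mul_cancel₀ _ (pow_ne_zero m hc.ne'), mul_pow]
  have e3 : (m : ℝ) * ((((m : ℝ) + 1) * A / c) * (((m : ℝ) + 1) ^ m * A ^ m))
      = ((m : ℝ) + 1) ^ m * ((m : ℝ) + 1) * (A ^ m * A) := by
    field_simp
    ring
  have lhs_eq : (((m : ℝ) + 1) * ((((m : ℝ) + 1) * A / c) ^ m * B)) * c ^ m
      = ((m : ℝ) + 1) ^ m * ((m : ℝ) + 1) * (A ^ m * B) := by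
    rw [show (((m : ℝ) + 1) * ((((m : ℝ) + 1) * A / c) ^ m * B)) * c ^ m
      = ((m : ℝ) + 1) * (((((m : ℝ) + 1) * A / c) ^ m * c ^ m) * B) from by ring, e1]
    ring
  have rhs_eq : ((m : ℝ) * (((m : ℝ) + 1) * A / c) ^ (m + 1) + B ^ (m + 1)) * c ^ m
      = ((m : ℝ) + 1) ^ m * ((m : ℝ) + 1) * (A ^ m * A) + c ^ m * B ^ (m + 1) := by
    rw [show ((m : ℝ) * (((m : ℝ) + 1) * A / c) ^ (m + 1) + B ^ (m + 1)) * c ^ m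
      = (m : ℝ) * ((((m : ℝ) + 1) * A / c) * (((((m : ℝ) + 1) * A / c) ^ m * c ^ m)))
        + c ^ m * B ^ (m + 1) from by ring, e1, e3]
  rw [lhs_eq, rhs_eq] at hkey
  simp only [Nat.add_sub_cancel, hcast]
  push_cast
  simp only [pow_succ] at hkey ⊢
  nlinarith [hkey]

lemma rpow_nat_div_aux (x d : ℝ) (hx : 0 ≤ x) (m : ℕ) :
    (x ^ ((1:ℝ)/d)) ^ m = x ^ ((m:ℝ)/d) := by
  rw [← Real.rpow_natCast (x ^ ((1:ℝ)/d)) m, ← Real.rpow_mul hx]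
  congr 1
  ring

lemma scalar_ineq (n : ℕ) (hn : 3 ≤ n) (x y hr : ℝ) (hx : 0 ≤ x) (hy : 0 ≤ y)
    (hh : 0 ≤ hr)
    (hineq : x + y ≤ hr ^ ((4:ℝ) / ((n:ℝ) + 2)) * x ^ (((n:ℝ) - 2) / ((n:ℝ) + 2))) :
    ((n:ℝ) ^ n / ((n:ℝ) - 1) ^ (n - 1)) ^ (((n:ℝ) + 2) / (4 * (n:ℝ))) *
      (y ^ (((n:ℝ) + 2) / (4 * (n:ℝ))) * x ^ ((3 * (n:ℝ) - 2) / (4 * (n:ℝ)))) ≤ hr := by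
  have hn3 : (3:ℝ) ≤ (n:ℝ) := by exact_mod_cast hn
  have hnpos : (0:ℝ) < (n:ℝ) := by linarith
  have hn1 : (0:ℝ) < (n:ℝ) - 1 := by linarith
  set θ : ℝ := ((n:ℝ) + 2) / (4 * (n:ℝ)) with hθdef
  have hθ : 0 < θ := by positivity
  have hKpos : 0 < (n:ℝ) ^ n / ((n:ℝ) - 1) ^ (n - 1) :=
    div_pos (pow_pos hnpos n) (pow_pos hn1 (n - 1))
  rcases eq_or_lt_of_le hx with hx0 | hxpos
  · -- x = 0 case
    have hxz : x ^ (((n:ℝ) - 2) / ((n:ℝ) + 2)) = 0 := by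
      rw [← hx0]
      exact Real.zero_rpow (ne_of_gt (div_pos (by linarith) (by linarith)))
    rw [hxz, mul_zero] at hineq
    have hyz : y = 0 := le_antisymm (by linarith [hx0]) hy
    rw [hyz, Real.zero_rpow hθ.ne', zero_mul, mul_zero]
    exact hh
  · -- 0 < x
    have hhpos : 0 < hr := by
      rcases hh.lt_or_eq with h' | h'
      · exact h'
      · exfalso
        rw [← h', Real.zero_rpow (by positivity), zero_mul] at hineq
        linarith
    set a : ℝ := x ^ ((1:ℝ)/((n:ℝ)+2)) with hadef
    set b : ℝ := hr ^ ((1:ℝ)/((n:ℝ)+2)) with hbdef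
    have ha : 0 < a := Real.rpow_pos_of_pos hxpos _
    have hb : 0 < b := Real.rpow_pos_of_pos hhpos _
    have ex : ∀ m : ℕ, a ^ m = x ^ ((m:ℝ)/((n:ℝ)+2)) := fun m =>
      rpow_nat_div_aux x _ hx m
    have eh : ∀ m : ℕ, b ^ m = hr ^ ((m:ℝ)/((n:ℝ)+2)) := fun m =>
      rpow_nat_div_aux hr _ hh m
    have ex1 : x ^ (((n:ℝ) - 2) / ((n:ℝ) + 2)) = a ^ (n - 2) := by
      rw [ex (n - 2)]
      congr 2
      rw [Nat.cast_sub (by omega : 2 ≤ n)]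
      norm_num
    have ex2 : x ^ ((3 * (n:ℝ) - 2) / ((n:ℝ) + 2)) = a ^ (3 * n - 2) := by
      rw [ex (3 * n - 2)]
      congr 2
      rw [Nat.cast_sub (by omega : 2 ≤ 3 * n)]
      push_cast
      ring
    have ex3 : x = a ^ (n + 2) := by
      rw [ex (n + 2)]
      push_cast
      rw [div_self (by positivity : (n:ℝ) + 2 ≠ 0), Real.rpow_one]
    have eh1 : hr ^ ((4:ℝ) / ((n:ℝ) + 2)) = b ^ 4 := by
      rw [eh 4]; norm_num
    have eh2 : hr ^ ((4 * (n:ℝ)) / ((n:ℝ) + 2)) = b ^ (4 * n) := by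
      rw [eh (4 * n)]; push_cast; ring_nf
    rw [ex1, eh1] at hineq
    set D : ℝ := b ^ 4 * a ^ (n - 2) - a ^ (n + 2) with hDdef
    have hyD : y ≤ D := by rw [hDdef, ← ex3]; linarith
    have hDnn : 0 ≤ D := le_trans hy hyD
    -- Main bound with D in place of y
    have main : ((n:ℝ) ^ n / ((n:ℝ) - 1) ^ (n - 1)) *
        (D * x ^ ((3 * (n:ℝ) - 2) / ((n:ℝ) + 2))) ≤ hr ^ ((4 * (n:ℝ)) / ((n:ℝ) + 2)) := by
      rw [ex2, eh2, div_mul_eq_mul_div, div_le_iff₀ (pow_pos hn1 (n - 1))]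
      have key := amgm_nat n hn (a ^ 4) (b ^ 4) (by positivity) (by positivity)
      have q1 : a ^ (n - 2) * a ^ (3 * n - 2) = a ^ (4 * (n - 1)) := by
        rw [← pow_add]; congr 1; omega
      have q2 : a ^ (n + 2) * a ^ (3 * n - 2) = a ^ (4 * (n - 1)) * a ^ 4 := by
        rw [← pow_add, ← pow_add]; congr 1; omega
      have expand : D * a ^ (3 * n - 2) = (a ^ 4) ^ (n - 1) * (b ^ 4 - a ^ 4) := by
        rw [hDdef]
        calc (b ^ 4 * a ^ (n - 2) - a ^ (n + 2)) * a ^ (3 * n - 2)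
            = b ^ 4 * (a ^ (n - 2) * a ^ (3 * n - 2)) -
              a ^ (n + 2) * a ^ (3 * n - 2) := by ring
          _ = (a ^ 4) ^ (n - 1) * (b ^ 4 - a ^ 4) := by rw [q1, q2, pow_mul]; ring
      have q3 : (b ^ 4) ^ n = b ^ (4 * n) := by rw [← pow_mul]
      calc (n:ℝ) ^ n * (D * a ^ (3 * n - 2))
          = (n:ℝ) ^ n * ((a ^ 4) ^ (n - 1) * (b ^ 4 - a ^ 4)) := by rw [expand]
        _ ≤ ((n:ℝ) - 1) ^ (n - 1) * (b ^ 4) ^ n := key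
        _ = b ^ (4 * n) * ((n:ℝ) - 1) ^ (n - 1) := by rw [q3]; ring
    -- Transfer via rpow θ
    have eθ1 : ((3 * (n:ℝ) - 2) / ((n:ℝ) + 2)) * θ = (3 * (n:ℝ) - 2) / (4 * (n:ℝ)) := by
      rw [hθdef]
      field_simp
    have eθ2 : ((4 * (n:ℝ)) / ((n:ℝ) + 2)) * θ = 1 := by
      rw [hθdef]
      field_simp
    have lhs_id : (((n:ℝ) ^ n / ((n:ℝ) - 1) ^ (n - 1)) *
        (D * x ^ ((3 * (n:ℝ) - 2) / ((n:ℝ) + 2)))) ^ θ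
        = ((n:ℝ) ^ n / ((n:ℝ) - 1) ^ (n - 1)) ^ θ *
          (D ^ θ * x ^ ((3 * (n:ℝ) - 2) / (4 * (n:ℝ)))) := by
      rw [Real.mul_rpow hKpos.le (mul_nonneg hDnn (Real.rpow_nonneg hx _)),
        Real.mul_rpow hDnn (Real.rpow_nonneg hx _),
        ← Real.rpow_mul hx, eθ1]
    have rhs_id : (hr ^ ((4 * (n:ℝ)) / ((n:ℝ) + 2))) ^ θ = hr := by
      rw [← Real.rpow_mul hh, eθ2, Real.rpow_one]
    have step := Real.rpow_le_rpow
      (mul_nonneg hKpos.le (mul_nonneg hDnn (Real.rpow_nonneg hx _))) main hθ.le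
    rw [lhs_id, rhs_id] at step
    refine le_trans ?_ step
    have hyθ : y ^ θ ≤ D ^ θ := Real.rpow_le_rpow hy hyD hθ.le
    have := mul_le_mul_of_nonneg_right hyθ (Real.rpow_nonneg hx
      ((3 * (n:ℝ) - 2) / (4 * (n:ℝ))))
    nlinarith [Real.rpow_nonneg hKpos.le θ, this,
      Real.rpow_pos_of_pos hKpos θ]

/-- Integral core of Theorem 2.1: on a measure space, for `n ≥ 3` and measurable
`h, A, B, u : Ω → ℝ` with `A ≥ 0`, `B > 0`, `u > 0` a.e., if the integrals
`∫ B·u^{(n+2)/(n-2)}`, `∫ A·u^{-(3n-2)/(n-2)}` and `∫ (h⁺)^{(n+2)/4}·B^{(2-n)/4}` are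
finite and `∫ B·u^{(n+2)/(n-2)} + ∫ A·u^{-(3n-2)/(n-2)} ≤ ∫ h⁺·u`, then
`(n^n/(n-1)^{n-1})^{(n+2)/(4n)} · ∫ A^{(n+2)/(4n)}·B^{(3n-2)/(4n)} ≤
  ∫ (h⁺)^{(n+2)/4}·B^{(2-n)/4}`. All integrands are nonnegative, so the integrals
are Lebesgue integrals with values in `ℝ≥0∞`. -/
theorem stmt5 {Ω : Type*} [MeasurableSpace Ω] (μ : Measure Ω) (n : ℕ) (hn : 3 ≤ n)
    (h A B u : Ω → ℝ) (hmh : Measurable h) (hmA : Measurable A) (hmB : Measurable B)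
    (hmu : Measurable u)
    (hA : ∀ᵐ x ∂μ, 0 ≤ A x) (hB : ∀ᵐ x ∂μ, 0 < B x) (hu : ∀ᵐ x ∂μ, 0 < u x)
    (hfin1 : ∫⁻ x, ENNReal.ofReal (B x * u x ^ (((n : ℝ) + 2) / ((n : ℝ) - 2))) ∂μ ≠ ⊤)
    (hfin2 : ∫⁻ x, ENNReal.ofReal
        (A x * u x ^ (-(3 * (n : ℝ) - 2) / ((n : ℝ) - 2))) ∂μ ≠ ⊤)
    (hfin3 : ∫⁻ x, ENNReal.ofReal
        ((max (h x) 0) ^ (((n : ℝ) + 2) / 4) * B x ^ ((2 - (n : ℝ)) / 4)) ∂μ ≠ ⊤)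
    (hyp : (∫⁻ x, ENNReal.ofReal (B x * u x ^ (((n : ℝ) + 2) / ((n : ℝ) - 2))) ∂μ) +
        (∫⁻ x, ENNReal.ofReal (A x * u x ^ (-(3 * (n : ℝ) - 2) / ((n : ℝ) - 2))) ∂μ) ≤
        ∫⁻ x, ENNReal.ofReal (max (h x) 0 * u x) ∂μ) :
    ENNReal.ofReal
        (((n : ℝ) ^ n / ((n : ℝ) - 1) ^ (n - 1)) ^ (((n : ℝ) + 2) / (4 * n))) *
      ∫⁻ x, ENNReal.ofReal
        (A x ^ (((n : ℝ) + 2) / (4 * n)) * B x ^ ((3 * (n : ℝ) - 2) / (4 * n))) ∂μ ≤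
      ∫⁻ x, ENNReal.ofReal
        ((max (h x) 0) ^ (((n : ℝ) + 2) / 4) * B x ^ ((2 - (n : ℝ)) / 4)) ∂μ := by
  have hn3 : (3:ℝ) ≤ (n:ℝ) := by exact_mod_cast hn
  have hd2 : (0:ℝ) < (n:ℝ) - 2 := by linarith
  have hd2' : (0:ℝ) < (n:ℝ) + 2 := by linarith
  have hnpos : (0:ℝ) < (n:ℝ) := by linarith
  set X := ∫⁻ x, ENNReal.ofReal (B x * u x ^ (((n : ℝ) + 2) / ((n : ℝ) - 2))) ∂μ with hXdef
  set Y := ∫⁻ x, ENNReal.ofReal (A x * u x ^ (-(3 * (n : ℝ) - 2) / ((n : ℝ) - 2))) ∂μ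
    with hYdef
  set H := ∫⁻ x, ENNReal.ofReal
      ((max (h x) 0) ^ (((n : ℝ) + 2) / 4) * B x ^ ((2 - (n : ℝ)) / 4)) ∂μ with hHdef
  -- ### Step 1: Hölder bound for ∫ h⁺ u
  have step1 : (∫⁻ x, ENNReal.ofReal (max (h x) 0 * u x) ∂μ) ≤
      H ^ ((4:ℝ) / ((n:ℝ) + 2)) * X ^ (((n:ℝ) - 2) / ((n:ℝ) + 2)) := by
    set f₁ : Ω → ENNReal :=
      fun x => ENNReal.ofReal (max (h x) 0 * B x ^ ((2 - (n:ℝ)) / ((n:ℝ) + 2))) with hf₁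
    set g₁ : Ω → ENNReal :=
      fun x => ENNReal.ofReal (B x ^ (((n:ℝ) - 2) / ((n:ℝ) + 2)) * u x) with hg₁
    have hpq : (((n:ℝ) + 2) / 4).HolderConjugate (((n:ℝ) + 2) / ((n:ℝ) - 2)) := by
      rw [Real.holderConjugate_iff]; constructor
      · rw [lt_div_iff₀ (by norm_num : (0:ℝ) < 4)]; linarith
      · field_simp
        ring
    have hmf : AEMeasurable f₁ μ := by fun_prop
    have hmg : AEMeasurable g₁ μ := by fun_prop
    have hold := ENNReal.lintegral_mul_le_Lp_mul_Lq μ hpq hmf hmg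
    have e0 : (∫⁻ x, ENNReal.ofReal (max (h x) 0 * u x) ∂μ) = ∫⁻ x, (f₁ * g₁) x ∂μ := by
      refine lintegral_congr_ae ?_
      filter_upwards [hB, hu] with x hBx hux
      have hBne : B x ^ ((2 - (n:ℝ)) / ((n:ℝ) + 2)) * B x ^ (((n:ℝ) - 2) / ((n:ℝ) + 2))
          = 1 := by
        rw [← Real.rpow_add hBx, ← add_div,
          show (2 - (n:ℝ)) + ((n:ℝ) - 2) = 0 by ring, zero_div, Real.rpow_zero]
      simp only [Pi.mul_apply, hf₁, hg₁]
      rw [← ENNReal.ofReal_mul (mul_nonneg (le_max_right _ _) (Real.rpow_nonneg hBx.le _))]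
      congr 1
      linear_combination -(max (h x) 0 * u x) * hBne
    have e1 : (∫⁻ x, f₁ x ^ (((n:ℝ) + 2) / 4) ∂μ) = H := by
      rw [hHdef]
      refine lintegral_congr_ae ?_
      filter_upwards [hB] with x hBx
      simp only [hf₁]
      rw [ENNReal.ofReal_rpow_of_nonneg
        (mul_nonneg (le_max_right _ _) (Real.rpow_nonneg hBx.le _)) (by positivity),
        Real.mul_rpow (le_max_right _ _) (Real.rpow_nonneg hBx.le _),
        ← Real.rpow_mul hBx.le]
      congr 3
      field_simp
    have e2 : (∫⁻ x, g₁ x ^ (((n:ℝ) + 2) / ((n:ℝ) - 2)) ∂μ) = X := by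
      rw [hXdef]
      refine lintegral_congr_ae ?_
      filter_upwards [hB, hu] with x hBx hux
      simp only [hg₁]
      rw [ENNReal.ofReal_rpow_of_nonneg
        (mul_nonneg (Real.rpow_nonneg hBx.le _) hux.le) (by positivity),
        Real.mul_rpow (Real.rpow_nonneg hBx.le _) hux.le,
        ← Real.rpow_mul hBx.le,
        show ((n:ℝ) - 2) / ((n:ℝ) + 2) * (((n:ℝ) + 2) / ((n:ℝ) - 2)) = 1 by
          field_simp,
        Real.rpow_one]
    rw [e0]
    refine hold.trans ?_
    rw [e1, e2, one_div_div, one_div_div]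
  -- ### Step 2: Hölder bound for the target integral
  set θ : ℝ := ((n:ℝ) + 2) / (4 * (n:ℝ)) with hθdef
  have hθpos : 0 < θ := by positivity
  set s : ℝ := (3 * (n:ℝ) - 2) / (4 * (n:ℝ)) with hsdef
  have hspos : 0 < s := by
    apply div_pos <;> linarith
  have step2 : (∫⁻ x, ENNReal.ofReal (A x ^ θ * B x ^ s) ∂μ) ≤ Y ^ θ * X ^ s := by
    set f₂ : Ω → ENNReal := fun x =>
      ENNReal.ofReal ((A x * u x ^ (-(3 * (n:ℝ) - 2) / ((n:ℝ) - 2))) ^ θ) with hf₂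
    set g₂ : Ω → ENNReal := fun x =>
      ENNReal.ofReal ((B x * u x ^ (((n:ℝ) + 2) / ((n:ℝ) - 2))) ^ s) with hg₂
    have hpq : ((4 * (n:ℝ)) / ((n:ℝ) + 2)).HolderConjugate
        ((4 * (n:ℝ)) / (3 * (n:ℝ) - 2)) := by
      rw [Real.holderConjugate_iff]; constructor
      · rw [lt_div_iff₀ (by linarith : (0:ℝ) < (n:ℝ) + 2)]; linarith
      · field_simp
        ring
    have hmf : AEMeasurable f₂ μ := by fun_prop
    have hmg : AEMeasurable g₂ μ := by fun_prop
    have hold := ENNReal.lintegral_mul_le_Lp_mul_Lq μ hpq hmf hmg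
    have e0 : (∫⁻ x, ENNReal.ofReal (A x ^ θ * B x ^ s) ∂μ) = ∫⁻ x, (f₂ * g₂) x ∂μ := by
      refine lintegral_congr_ae ?_
      filter_upwards [hA, hB, hu] with x hAx hBx hux
      simp only [Pi.mul_apply, hf₂, hg₂]
      rw [← ENNReal.ofReal_mul (Real.rpow_nonneg
        (mul_nonneg hAx (Real.rpow_nonneg hux.le _)) _)]
      congr 1
      rw [Real.mul_rpow hAx (Real.rpow_nonneg hux.le _),
        Real.mul_rpow hBx.le (Real.rpow_nonneg hux.le _),
        ← Real.rpow_mul hux.le, ← Real.rpow_mul hux.le]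
      have hu0 : u x ^ (-(3 * (n:ℝ) - 2) / ((n:ℝ) - 2) * θ) *
          u x ^ (((n:ℝ) + 2) / ((n:ℝ) - 2) * s) = 1 := by
        rw [← Real.rpow_add hux, show (-(3 * (n:ℝ) - 2) / ((n:ℝ) - 2) * θ) +
          (((n:ℝ) + 2) / ((n:ℝ) - 2) * s) = 0 by rw [hθdef, hsdef]; field_simp; ring,
          Real.rpow_zero]
      calc A x ^ θ * B x ^ s
          = (A x ^ θ * B x ^ s) * (u x ^ (-(3 * (n:ℝ) - 2) / ((n:ℝ) - 2) * θ) *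
            u x ^ (((n:ℝ) + 2) / ((n:ℝ) - 2) * s)) := by rw [hu0, mul_one]
        _ = A x ^ θ * u x ^ (-(3 * (n:ℝ) - 2) / ((n:ℝ) - 2) * θ) *
            (B x ^ s * u x ^ (((n:ℝ) + 2) / ((n:ℝ) - 2) * s)) := by ring
    have e1 : (∫⁻ x, f₂ x ^ ((4 * (n:ℝ)) / ((n:ℝ) + 2)) ∂μ) = Y := by
      rw [hYdef]
      refine lintegral_congr_ae ?_
      filter_upwards [hA, hu] with x hAx hux
      simp only [hf₂]
      rw [ENNReal.ofReal_rpow_of_nonneg (Real.rpow_nonneg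
          (mul_nonneg hAx (Real.rpow_nonneg hux.le _)) _) (by positivity),
        ← Real.rpow_mul (mul_nonneg hAx (Real.rpow_nonneg hux.le _)),
        show θ * ((4 * (n:ℝ)) / ((n:ℝ) + 2)) = 1 by rw [hθdef]; field_simp,
        Real.rpow_one]
    have e2 : (∫⁻ x, g₂ x ^ ((4 * (n:ℝ)) / (3 * (n:ℝ) - 2)) ∂μ) = X := by
      rw [hXdef]
      refine lintegral_congr_ae ?_
      filter_upwards [hB, hu] with x hBx hux
      simp only [hg₂]
      have h32 : (0:ℝ) < 3 * (n:ℝ) - 2 := by linarith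
      rw [ENNReal.ofReal_rpow_of_nonneg (Real.rpow_nonneg
          (mul_nonneg hBx.le (Real.rpow_nonneg hux.le _)) _)
          (le_of_lt (div_pos (by linarith) h32)),
        ← Real.rpow_mul (mul_nonneg hBx.le (Real.rpow_nonneg hux.le _)),
        show s * ((4 * (n:ℝ)) / (3 * (n:ℝ) - 2)) = 1 by
          rw [hsdef, div_mul_div_comm, div_eq_one_iff_eq (by positivity)]; ring,
        Real.rpow_one]
    rw [e0]
    refine hold.trans ?_
    rw [e1, e2, one_div_div, one_div_div, ← hθdef, ← hsdef]
  -- ### Step 3: assemble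
  have hXY : X + Y ≤ H ^ ((4:ℝ) / ((n:ℝ) + 2)) * X ^ (((n:ℝ) - 2) / ((n:ℝ) + 2)) :=
    hyp.trans step1
  have hRHSfin : H ^ ((4:ℝ) / ((n:ℝ) + 2)) * X ^ (((n:ℝ) - 2) / ((n:ℝ) + 2)) ≠ ⊤ :=
    ENNReal.mul_ne_top (ENNReal.rpow_ne_top_of_nonneg (by positivity) hfin3)
      (ENNReal.rpow_ne_top_of_nonneg (by positivity) hfin1)
  have treal := (ENNReal.toReal_le_toReal (ENNReal.add_ne_top.mpr ⟨hfin1, hfin2⟩)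
    hRHSfin).mpr hXY
  rw [ENNReal.toReal_add hfin1 hfin2, ENNReal.toReal_mul, ← ENNReal.toReal_rpow,
    ← ENNReal.toReal_rpow] at treal
  have key := scalar_ineq n hn X.toReal Y.toReal H.toReal ENNReal.toReal_nonneg
    ENNReal.toReal_nonneg ENNReal.toReal_nonneg treal
  calc ENNReal.ofReal (((n:ℝ) ^ n / ((n:ℝ) - 1) ^ (n - 1)) ^ θ) *
        ∫⁻ x, ENNReal.ofReal (A x ^ θ * B x ^ s) ∂μ
      ≤ ENNReal.ofReal (((n:ℝ) ^ n / ((n:ℝ) - 1) ^ (n - 1)) ^ θ) * (Y ^ θ * X ^ s) :=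
        mul_le_mul_right step2 _
    _ = ENNReal.ofReal (((n:ℝ) ^ n / ((n:ℝ) - 1) ^ (n - 1)) ^ θ *
        (Y.toReal ^ θ * X.toReal ^ s)) := by
        have hCnn : 0 ≤ ((n:ℝ) ^ n / ((n:ℝ) - 1) ^ (n - 1)) ^ θ :=
          Real.rpow_nonneg (div_nonneg (pow_nonneg hnpos.le n)
            (pow_nonneg (by linarith) _)) _
        rw [ENNReal.ofReal_mul hCnn,
          ENNReal.ofReal_mul (Real.rpow_nonneg ENNReal.toReal_nonneg _),
          ← ENNReal.ofReal_rpow_of_nonneg ENNReal.toReal_nonneg hθpos.le,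
          ← ENNReal.ofReal_rpow_of_nonneg ENNReal.toReal_nonneg hspos.le,
          ENNReal.ofReal_toReal hfin2, ENNReal.ofReal_toReal hfin1]
    _ ≤ ENNReal.ofReal H.toReal := ENNReal.ofReal_le_ofReal key
    _ = H := ENNReal.ofReal_toReal hfin3
end

section
/- Let (Ω, μ) be a measure space, n ≥ 3 an integer, 2* = 2n/(n-2), p > 1 a real number, p̂ = (2* + p - 1)/(2* - 1) and α = (n-2)(p+1)/4. Let h, B, C, u : Ω → ℝ be measurable with B > 0, C ≥ 0 and u > 0 μ-a.e. Assume the integrals ∫ B·u^{2*-1} dμ, ∫ C·u^{-p} dμ and ∫ (h⁺)^{(n+2)/4}·B^{(2-n)/4} dμ are finite and that ∫ B·u^{2*-1} dμ + ∫ C·u^{-p} dμ ≤ ∫ h⁺·u dμ. Then ((α+1)^{α+1}/α^α)^{1/p̂} · ∫ C^{1/p̂}·B^{(p̂-1)/p̂} dμ ≤ ∫ (h⁺)^{(n+2)/4}·B^{(2-n)/4} dμ. -/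
/-!
Write `θ = 4/(n+2)`, so that `(n+2)/4 = θ⁻¹` and `2* - 1 = (1-θ)⁻¹`, and let `X = ∫ B u^{2*-1}`,
`Y = ∫ C u^{-p}`, `K = ∫ (h⁺)^{(n+2)/4} B^{(2-n)/4}`, `L = ∫ C^{1/p̂} B^{(p̂-1)/p̂}`.
Hölder's inequality gives `∫ h⁺ u ≤ K^θ X^{1-θ}` and `L ≤ Y^{1/p̂} X^{(p̂-1)/p̂}`. Eliminating `Y`
from the hypothesis yields `z + L^{p̂} z^{-α} ≤ K^θ` for `z = X^θ`, and weighted AM-GM bounds the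
left side below by its minimum over `z`, `((α+1)^{α+1}/α^α)^{1/(α+1)} L^{p̂/(α+1)}`. Since
`p̂ = θ(α+1)`, this is the `θ`-th power of the claim.
-/

open MeasureTheory

namespace Real

theorem const_mul_rpow_le_add_mul_rpow_neg {α z D : ℝ} (hα : 0 < α) (hz : 0 < z) (hD : 0 ≤ D) :
    ((α + 1) ^ (α + 1) / α ^ α) ^ (1 / (α + 1)) * D ^ (1 / (α + 1)) ≤ z + D * z ^ (-α) := by
  have hα1 : 0 < α + 1 := by linarith
  have hw : 0 < 1 / (α + 1) := by positivity
  have hα1w : (α + 1) * (1 / (α + 1)) = 1 := by field_simp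
  generalize 1 / (α + 1) = w at hw hα1w ⊢
  have hαw : α * w = 1 - w := by linear_combination hα1w
  -- the points are chosen so that their weighted arithmetic mean is exactly `z + D z^(-α)`
  have key := geom_mean_le_arith_mean2_weighted (w₁ := 1 - w) (w₂ := w)
    (p₁ := (α + 1) / α * z) (p₂ := (α + 1) * (D * z ^ (-α)))
    (by rw [← hαw]; positivity) (by positivity) (by positivity) (by positivity) (by ring)
  convert key using 1
  · have hz1 : z ^ (1 - w) * z ^ (-α * w) = 1 := by
      rw [← rpow_add hz, neg_mul, hαw, add_neg_cancel, rpow_zero]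
    have hα1' : (α + 1) ^ (1 - w) * (α + 1) ^ w = α + 1 := by
      rw [← rpow_add hα1, sub_add_cancel, rpow_one]
    rw [mul_rpow (by positivity) hz.le, mul_rpow hα1.le (by positivity),
      mul_rpow hD (by positivity), div_rpow hα1.le hα.le, div_rpow (by positivity) (by positivity),
      ← rpow_mul hα1.le, ← rpow_mul hα.le, ← rpow_mul hz.le, hαw, hα1w, rpow_one]
    linear_combination (-((α + 1) ^ (1 - w) / α ^ (1 - w) * (α + 1) ^ w * D ^ w)) * hz1
      - D ^ w / α ^ (1 - w) * hα1'
  · rw [← hαw]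
    field_simp
    linear_combination -hα1w

theorem rpow_mul_rpow_le_of_le_rpow_mul_rpow {x y l r : ℝ} (hx : 0 < x) (hy : 0 ≤ y) (hl : 0 ≤ l)
    (hr : 0 < r) (h : l ≤ y ^ (1 / r) * x ^ ((r - 1) / r)) : l ^ r * x ^ (1 - r) ≤ y := by
  have hpow : l ^ r ≤ y * x ^ (r - 1) := by
    calc l ^ r ≤ (y ^ (1 / r) * x ^ ((r - 1) / r)) ^ r := rpow_le_rpow hl h hr.le
      _ = y * x ^ (r - 1) := by
        rw [mul_rpow (by positivity) (by positivity), ← rpow_mul hy, ← rpow_mul hx.le,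
          one_div_mul_cancel hr.ne', div_mul_cancel₀ _ hr.ne', rpow_one]
  calc l ^ r * x ^ (1 - r) ≤ y * x ^ (r - 1) * x ^ (1 - r) := by gcongr
    _ = y := by rw [mul_assoc, ← rpow_add hx, sub_add_sub_cancel', sub_self, rpow_zero, mul_one]

theorem const_rpow_mul_le_of_add_le_of_le_rpow_mul_rpow {θ r α x y k l : ℝ} (hθ : 0 < θ)
    (hr : 1 < r) (hα : 0 < α) (hθαr : θ * (α + 1) = r) (hx : 0 ≤ x) (hy : 0 ≤ y) (hk : 0 ≤ k)
    (hl : 0 ≤ l) (h₁ : x + y ≤ k ^ θ * x ^ (1 - θ)) (h₂ : l ≤ y ^ (1 / r) * x ^ ((r - 1) / r)) :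
    ((α + 1) ^ (α + 1) / α ^ α) ^ (1 / r) * l ≤ k := by
  have hr0 : 0 < r := by linarith
  rcases hx.eq_or_lt with rfl | hx
  · have hl0 : l ≤ 0 := by
      rwa [zero_rpow (div_pos (by linarith) hr0).ne', mul_zero] at h₂
    rw [le_antisymm hl0 hl, mul_zero]
    exact hk
  have hy' := rpow_mul_rpow_le_of_le_rpow_mul_rpow hx hy hl hr0 h₂
  have hz : x ^ θ + l ^ r * (x ^ θ) ^ (-α) ≤ k ^ θ := by
    refine le_of_mul_le_mul_right ?_ (rpow_pos_of_pos hx (1 - θ))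
    have e₁ : x ^ θ * x ^ (1 - θ) = x := by rw [← rpow_add hx, add_sub_cancel, rpow_one]
    have e₂ : (x ^ θ) ^ (-α) * x ^ (1 - θ) = x ^ (1 - r) := by
      rw [← rpow_mul hx.le, ← rpow_add hx, ← hθαr]
      ring_nf
    calc (x ^ θ + l ^ r * (x ^ θ) ^ (-α)) * x ^ (1 - θ) = x + l ^ r * x ^ (1 - r) := by
          linear_combination e₁ + l ^ r * e₂
      _ ≤ k ^ θ * x ^ (1 - θ) := by linarith
  have hM : 0 ≤ (α + 1) ^ (α + 1) / α ^ α := by positivity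
  have hamgm := (const_mul_rpow_le_add_mul_rpow_neg hα (rpow_pos_of_pos hx θ)
    (rpow_nonneg hl r)).trans hz
  have e : (((α + 1) ^ (α + 1) / α ^ α) ^ (1 / r) * l) ^ θ
      = ((α + 1) ^ (α + 1) / α ^ α) ^ (1 / (α + 1)) * (l ^ r) ^ (1 / (α + 1)) := by
    have hα1 : α + 1 ≠ 0 := by positivity
    rw [mul_rpow (by positivity) hl, ← rpow_mul hM, ← rpow_mul hl, ← hθαr]
    field_simp
  rwa [← rpow_le_rpow_iff (by positivity) hk hθ, e]

theorem mul_eq_mul_rpow_mul_mul_rpow {θ H b U : ℝ} (hθ0 : 0 < θ) (hθ1 : θ < 1) (hH : 0 ≤ H)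
    (hb : 0 < b) (hU : 0 ≤ U) :
    H * U = (H ^ θ⁻¹ * b ^ (1 - θ⁻¹)) ^ θ * (b * U ^ (1 - θ)⁻¹) ^ (1 - θ) := by
  have hθ1' : 0 < 1 - θ := by linarith
  have hb1 : b ^ ((1 - θ⁻¹) * θ) * b ^ (1 - θ) = 1 := by
    rw [← rpow_add hb, sub_mul, inv_mul_cancel₀ hθ0.ne', one_mul, sub_add_sub_cancel', sub_self,
      rpow_zero]
  rw [mul_rpow (by positivity) (by positivity), mul_rpow hb.le (by positivity), ← rpow_mul hH,
    ← rpow_mul hb.le, ← rpow_mul hU, inv_mul_cancel₀ hθ0.ne', inv_mul_cancel₀ hθ1'.ne', rpow_one,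
    rpow_one]
  linear_combination -(H * U) * hb1

theorem mul_rpow_mul_mul_rpow_eq_rpow_mul_rpow {c b U m q s t : ℝ} (hc : 0 ≤ c) (hb : 0 ≤ b)
    (hU : 0 < U) (h : m * s + q * t = 0) :
    (c * U ^ m) ^ s * (b * U ^ q) ^ t = c ^ s * b ^ t := by
  have hU1 : U ^ (m * s) * U ^ (q * t) = 1 := by rw [← rpow_add hU, h, rpow_zero]
  rw [mul_rpow hc (by positivity), mul_rpow hb (by positivity), ← rpow_mul hU.le,
    ← rpow_mul hU.le]
  linear_combination c ^ s * b ^ t * hU1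

end Real

namespace ENNReal

theorem ofReal_const_rpow_mul_le_of_add_le_of_le_rpow_mul_rpow {θ r α : ℝ} {X Y K L : ℝ≥0∞}
    (hθ0 : 0 < θ) (hθ1 : θ ≤ 1) (hr : 1 < r) (hα : 0 < α) (hθαr : θ * (α + 1) = r)
    (hX : X ≠ ⊤) (hK : K ≠ ⊤) (h₁ : X + Y ≤ K ^ θ * X ^ (1 - θ))
    (h₂ : L ≤ Y ^ (1 / r) * X ^ ((r - 1) / r)) :
    ENNReal.ofReal (((α + 1) ^ (α + 1) / α ^ α) ^ (1 / r)) * L ≤ K := by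
  have hr0 : 0 < r := by linarith
  have hbound₁ : K ^ θ * X ^ (1 - θ) ≠ ⊤ :=
    mul_ne_top (rpow_ne_top_of_nonneg hθ0.le hK) (rpow_ne_top_of_nonneg (by linarith) hX)
  have hY : Y ≠ ⊤ := ne_top_of_le_ne_top hbound₁ (le_add_self.trans h₁)
  have hbound₂ : Y ^ (1 / r) * X ^ ((r - 1) / r) ≠ ⊤ :=
    mul_ne_top (rpow_ne_top_of_nonneg (by positivity) hY)
      (rpow_ne_top_of_nonneg (div_nonneg (by linarith) hr0.le) hX)
  have hL : L ≠ ⊤ := ne_top_of_le_ne_top hbound₂ h₂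
  have h₁' := toReal_mono hbound₁ h₁
  have h₂' := toReal_mono hbound₂ h₂
  rw [toReal_add hX hY, toReal_mul, ← toReal_rpow, ← toReal_rpow] at h₁'
  rw [toReal_mul, ← toReal_rpow, ← toReal_rpow] at h₂'
  rw [← ofReal_toReal hL, ← ofReal_toReal hK, ← ofReal_mul (by positivity)]
  exact ofReal_le_ofReal <| Real.const_rpow_mul_le_of_add_le_of_le_rpow_mul_rpow hθ0 hr hα hθαr
    toReal_nonneg toReal_nonneg toReal_nonneg toReal_nonneg h₁' h₂'

end ENNReal

theorem lintegral_ofReal_le_of_ae_eq_rpow_mul_rpow {Ω : Type*} [MeasurableSpace Ω]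
    {μ : Measure Ω} {f g k : Ω → ℝ} {s t : ℝ} (hf : AEMeasurable f μ) (hg : AEMeasurable g μ)
    (hf0 : 0 ≤ᵐ[μ] f) (hg0 : 0 ≤ᵐ[μ] g) (hs : 0 ≤ s) (ht : 0 ≤ t) (hst : s + t = 1)
    (hk : ∀ᵐ x ∂μ, k x = f x ^ s * g x ^ t) :
    ∫⁻ x, ENNReal.ofReal (k x) ∂μ ≤
      (∫⁻ x, ENNReal.ofReal (f x) ∂μ) ^ s * (∫⁻ x, ENNReal.ofReal (g x) ∂μ) ^ t := by
  calc ∫⁻ x, ENNReal.ofReal (k x) ∂μ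
      = ∫⁻ x, ENNReal.ofReal (f x) ^ s * ENNReal.ofReal (g x) ^ t ∂μ := by
        refine lintegral_congr_ae ?_
        filter_upwards [hf0, hg0, hk] with x hfx hgx hkx
        rw [hkx, ENNReal.ofReal_mul (Real.rpow_nonneg hfx s), ENNReal.ofReal_rpow_of_nonneg hfx hs,
          ENNReal.ofReal_rpow_of_nonneg hgx ht]
    _ ≤ _ := ENNReal.lintegral_mul_norm_pow_le hf.ennreal_ofReal hg.ennreal_ofReal hs ht hst

theorem lichnerowicz_lintegral_bound {Ω : Type*} [MeasurableSpace Ω] {μ : Measure Ω}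
    {θ p phat α : ℝ} (hθ0 : 0 < θ) (hθ1 : θ < 1) (hp : 0 < p) (hphat : phat = 1 + (1 - θ) * p)
    (hα : α = phat / θ - 1) {H B C u : Ω → ℝ} (hmH : AEMeasurable H μ) (hmB : AEMeasurable B μ)
    (hmC : AEMeasurable C μ) (hmu : AEMeasurable u μ) (hH : ∀ᵐ x ∂μ, 0 ≤ H x)
    (hB : ∀ᵐ x ∂μ, 0 < B x) (hC : ∀ᵐ x ∂μ, 0 ≤ C x) (hu : ∀ᵐ x ∂μ, 0 < u x)
    (hfin : ∫⁻ x, ENNReal.ofReal (B x * u x ^ (1 - θ)⁻¹) ∂μ ≠ ⊤)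
    (hyp : ∫⁻ x, ENNReal.ofReal (B x * u x ^ (1 - θ)⁻¹) ∂μ +
        ∫⁻ x, ENNReal.ofReal (C x * u x ^ (-p)) ∂μ ≤ ∫⁻ x, ENNReal.ofReal (H x * u x) ∂μ) :
    ENNReal.ofReal (((α + 1) ^ (α + 1) / α ^ α) ^ (1 / phat)) *
      ∫⁻ x, ENNReal.ofReal (C x ^ (1 / phat) * B x ^ ((phat - 1) / phat)) ∂μ ≤
      ∫⁻ x, ENNReal.ofReal (H x ^ θ⁻¹ * B x ^ (1 - θ⁻¹)) ∂μ := by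
  have hphat1 : 1 < phat := by rw [hphat]; nlinarith
  have hphat0 : 0 < phat := by linarith
  have hα0 : 0 < α := by rw [hα, sub_pos, one_lt_div hθ0]; linarith
  have hmBu : AEMeasurable (fun x => B x * u x ^ (1 - θ)⁻¹) μ :=
    hmB.mul (hmu.pow aemeasurable_const)
  have hBu : ∀ᵐ x ∂μ, 0 ≤ B x * u x ^ (1 - θ)⁻¹ := by
    filter_upwards [hB, hu] with x hBx hux using by positivity
  have hHolder₁ : ∫⁻ x, ENNReal.ofReal (H x * u x) ∂μ ≤
      (∫⁻ x, ENNReal.ofReal (H x ^ θ⁻¹ * B x ^ (1 - θ⁻¹)) ∂μ) ^ θ *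
        (∫⁻ x, ENNReal.ofReal (B x * u x ^ (1 - θ)⁻¹) ∂μ) ^ (1 - θ) := by
    refine lintegral_ofReal_le_of_ae_eq_rpow_mul_rpow
      ((hmH.pow aemeasurable_const).mul (hmB.pow aemeasurable_const)) hmBu ?_ hBu hθ0.le
      (by linarith) (by ring) ?_
    · filter_upwards [hH, hB] with x hHx hBx using by positivity
    · filter_upwards [hH, hB, hu] with x hHx hBx hux
      exact Real.mul_eq_mul_rpow_mul_mul_rpow hθ0 hθ1 hHx hBx hux.le
  have hHolder₂ : ∫⁻ x, ENNReal.ofReal (C x ^ (1 / phat) * B x ^ ((phat - 1) / phat)) ∂μ ≤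
      (∫⁻ x, ENNReal.ofReal (C x * u x ^ (-p)) ∂μ) ^ (1 / phat) *
        (∫⁻ x, ENNReal.ofReal (B x * u x ^ (1 - θ)⁻¹) ∂μ) ^ ((phat - 1) / phat) := by
    refine lintegral_ofReal_le_of_ae_eq_rpow_mul_rpow (hmC.mul (hmu.pow aemeasurable_const)) hmBu
      ?_ hBu (by positivity) (div_nonneg (by linarith) hphat0.le) (by field_simp; ring) ?_
    · filter_upwards [hC, hu] with x hCx hux using by positivity
    · filter_upwards [hB, hC, hu] with x hBx hCx hux
      refine (Real.mul_rpow_mul_mul_rpow_eq_rpow_mul_rpow hCx hBx.le hux ?_).symm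
      rw [hphat]
      field_simp [(sub_pos.2 hθ1).ne']
      ring
  rcases eq_or_ne (∫⁻ x, ENNReal.ofReal (H x ^ θ⁻¹ * B x ^ (1 - θ⁻¹)) ∂μ) ⊤ with hK | hK
  · exact hK ▸ le_top
  exact ENNReal.ofReal_const_rpow_mul_le_of_add_le_of_le_rpow_mul_rpow hθ0 hθ1.le hphat1 hα0
    (by rw [hα]; field_simp; ring) hfin hK (hyp.trans hHolder₁) hHolder₂

theorem stmt17_general {Ω : Type*} [MeasurableSpace Ω] (μ : Measure Ω) (n : ℕ) (hn : 3 ≤ n)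
    (p : ℝ) (hp : 1 < p)
    (phat α : ℝ)
    (hphat : phat = (2 * (n : ℝ) / ((n : ℝ) - 2) + p - 1) /
      (2 * (n : ℝ) / ((n : ℝ) - 2) - 1))
    (hα : α = ((n : ℝ) - 2) * (p + 1) / 4)
    (h B C u : Ω → ℝ) (hmh : Measurable h) (hmB : Measurable B) (hmC : Measurable C)
    (hmu : Measurable u)
    (hB : ∀ᵐ x ∂μ, 0 < B x) (hC : ∀ᵐ x ∂μ, 0 ≤ C x) (hu : ∀ᵐ x ∂μ, 0 < u x)
    (hfin1 : ∫⁻ x, ENNReal.ofReal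
        (B x * u x ^ (2 * (n : ℝ) / ((n : ℝ) - 2) - 1)) ∂μ ≠ ⊤)
    (hyp : (∫⁻ x, ENNReal.ofReal (B x * u x ^ (2 * (n : ℝ) / ((n : ℝ) - 2) - 1)) ∂μ) +
        (∫⁻ x, ENNReal.ofReal (C x * u x ^ (-p)) ∂μ) ≤
        ∫⁻ x, ENNReal.ofReal (max (h x) 0 * u x) ∂μ) :
    ENNReal.ofReal (((α + 1) ^ (α + 1) / α ^ α) ^ (1 / phat)) *
      ∫⁻ x, ENNReal.ofReal (C x ^ (1 / phat) * B x ^ ((phat - 1) / phat)) ∂μ ≤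
      ∫⁻ x, ENNReal.ofReal
        ((max (h x) 0) ^ (((n : ℝ) + 2) / 4) * B x ^ ((2 - (n : ℝ)) / 4)) ∂μ := by
  have hN : (3 : ℝ) ≤ n := by exact_mod_cast hn
  set θ : ℝ := 4 / (n + 2) with hθ
  have hθ0 : 0 < θ := by positivity
  have hθ1 : θ < 1 := by rw [hθ, div_lt_one (by positivity)]; linarith
  have hcrit : 2 * (n : ℝ) / (n - 2) - 1 = (1 - θ)⁻¹ := by
    rw [hθ, one_sub_div (by positivity), inv_div]
    field_simp [show (n : ℝ) - 2 ≠ 0 by linarith, show (n : ℝ) + 2 - 4 ≠ 0 by linarith]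
    ring
  have hHexp : ((n : ℝ) + 2) / 4 = θ⁻¹ := (inv_div _ _).symm
  have hBexp : (2 - (n : ℝ)) / 4 = 1 - θ⁻¹ := by rw [← hHexp]; ring
  have hphat' : phat = 1 + (1 - θ) * p := by
    rw [hphat, add_sub_right_comm, hcrit]
    field_simp [(sub_pos.2 hθ1).ne']
  rw [hcrit] at hyp hfin1
  rw [hHexp, hBexp]
  exact lichnerowicz_lintegral_bound hθ0 hθ1 (by linarith) hphat'
    (by rw [hα, hphat', hθ]; field_simp; ring)
    (hmh.max measurable_const).aemeasurable hmB.aemeasurable hmC.aemeasurable hmu.aemeasurable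
    (.of_forall fun x => le_max_right _ _) hB hC hu hfin1 hyp

/-- Integral core of the nonexistence condition (4.2): with `2* = 2n/(n-2)`, `p > 1`,
`p̂ = (2* + p - 1)/(2* - 1)`, `α = (n-2)(p+1)/4`, and measurable `h, B, C, u` with
`B > 0`, `C ≥ 0`, `u > 0` a.e., if the integrals `∫ B·u^{2*-1}`, `∫ C·u^{-p}` and
`∫ (h⁺)^{(n+2)/4}·B^{(2-n)/4}` are finite and
`∫ B·u^{2*-1} + ∫ C·u^{-p} ≤ ∫ h⁺·u`, then
`((α+1)^{α+1}/α^α)^{1/p̂} · ∫ C^{1/p̂}·B^{(p̂-1)/p̂} ≤ ∫ (h⁺)^{(n+2)/4}·B^{(2-n)/4}`,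
where `h⁺ = max(h,0)`. All integrands are nonnegative, so the integrals are Lebesgue
integrals with values in `ℝ≥0∞`. -/
theorem stmt17 {Ω : Type*} [MeasurableSpace Ω] (μ : Measure Ω) (n : ℕ) (hn : 3 ≤ n)
    (p : ℝ) (hp : 1 < p)
    (phat α : ℝ)
    (hphat : phat = (2 * (n : ℝ) / ((n : ℝ) - 2) + p - 1) /
      (2 * (n : ℝ) / ((n : ℝ) - 2) - 1))
    (hα : α = ((n : ℝ) - 2) * (p + 1) / 4)
    (h B C u : Ω → ℝ) (hmh : Measurable h) (hmB : Measurable B) (hmC : Measurable C)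
    (hmu : Measurable u)
    (hB : ∀ᵐ x ∂μ, 0 < B x) (hC : ∀ᵐ x ∂μ, 0 ≤ C x) (hu : ∀ᵐ x ∂μ, 0 < u x)
    (hfin1 : ∫⁻ x, ENNReal.ofReal
        (B x * u x ^ (2 * (n : ℝ) / ((n : ℝ) - 2) - 1)) ∂μ ≠ ⊤)
    (hfin2 : ∫⁻ x, ENNReal.ofReal (C x * u x ^ (-p)) ∂μ ≠ ⊤)
    (hfin3 : ∫⁻ x, ENNReal.ofReal
        ((max (h x) 0) ^ (((n : ℝ) + 2) / 4) * B x ^ ((2 - (n : ℝ)) / 4)) ∂μ ≠ ⊤)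
    (hyp : (∫⁻ x, ENNReal.ofReal (B x * u x ^ (2 * (n : ℝ) / ((n : ℝ) - 2) - 1)) ∂μ) +
        (∫⁻ x, ENNReal.ofReal (C x * u x ^ (-p)) ∂μ) ≤
        ∫⁻ x, ENNReal.ofReal (max (h x) 0 * u x) ∂μ) :
    ENNReal.ofReal (((α + 1) ^ (α + 1) / α ^ α) ^ (1 / phat)) *
      ∫⁻ x, ENNReal.ofReal (C x ^ (1 / phat) * B x ^ ((phat - 1) / phat)) ∂μ ≤
      ∫⁻ x, ENNReal.ofReal
        ((max (h x) 0) ^ (((n : ℝ) + 2) / 4) * B x ^ ((2 - (n : ℝ)) / 4)) ∂μ :=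
  stmt17_general μ n hn p hp phat α hphat hα h B C u hmh hmB hmC hmu hB hC hu hfin1 hyp
end
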